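/- (§5.4) If ℓ(a) is irreducible as an element of the ring ℤ[q], then a is irreducible in 𝒜: a ≠ 1 and whenever a = b·c in 𝒜, one has b = 1 or c = 1. -/

import Mathlib

/-- The smallest congruence on the free magma on one generator containing
all instances of the medial law `(w⊕x)⊕(y⊕z) = (w⊕y)⊕(x⊕z)`. -/
inductive MedialRel : FreeMagma PUnit → FreeMagma PUnit → Prop
  | medial (w x y z : FreeMagma PUnit) :
      MedialRel ((w * x) * (y * z)) ((w * y) * (x * z))
  | refl (a : FreeMagma PUnit) : MedialRel a a
  | symm {a b : FreeMagma PUnit} : MedialRel a b → MedialRel b a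
  | trans {a b c : FreeMagma PUnit} : MedialRel a b → MedialRel b c → MedialRel a c
  | mul {a b c d : FreeMagma PUnit} :
      MedialRel a b → MedialRel c d → MedialRel (a * c) (b * d)

/-- The noncommutative natural numbers `𝒜 := M/∼`. -/
def NCN : Type := Quot MedialRel

/-- The induced binary operation `⊕` on `𝒜`. -/
def NCN.oplus : NCN → NCN → NCN :=
  Quot.map₂ (· * ·) (fun a _ _ h => MedialRel.mul (MedialRel.refl a) h)
    (fun _ _ b h => MedialRel.mul h (MedialRel.refl b))

/-- The class of the generator `1` in `𝒜`. -/
def NCN.one : NCN := Quot.mk _ (FreeMagma.of PUnit.unit)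

/-- Substitution multiplication on `M`: `a · b` is the image of `a` under the unique
magma homomorphism `M → M` sending the generator to `b`. -/
def FreeMagma.subMul (a b : FreeMagma PUnit) : FreeMagma PUnit :=
  (FreeMagma.lift fun _ => b) a

theorem MedialRel.subMul_left {a a' : FreeMagma PUnit} (b : FreeMagma PUnit)
    (h : MedialRel a a') : MedialRel (a.subMul b) (a'.subMul b) := by
  induction h with
  | medial w x y z =>
      simp only [FreeMagma.subMul, map_mul]
      exact MedialRel.medial _ _ _ _
  | refl a => exact MedialRel.refl _
  | symm _ ih => exact MedialRel.symm ih
  | trans _ _ ih1 ih2 => exact MedialRel.trans ih1 ih2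
  | mul _ _ ih1 ih2 =>
      simp only [FreeMagma.subMul, map_mul] at *
      exact MedialRel.mul ih1 ih2

theorem MedialRel.subMul_right (a : FreeMagma PUnit) {b b' : FreeMagma PUnit}
    (h : MedialRel b b') : MedialRel (a.subMul b) (a.subMul b') := by
  induction a with
  | ih1 u => simpa [FreeMagma.subMul] using h
  | ih2 x y ihx ihy =>
      simp only [FreeMagma.subMul, map_mul] at *
      exact MedialRel.mul ihx ihy

/-- The induced multiplication on `𝒜`. -/
def NCN.mul : NCN → NCN → NCN :=
  Quot.map₂ FreeMagma.subMul (fun a _ _ h => MedialRel.subMul_right a h)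
    (fun _ _ b h => MedialRel.subMul_left b h)

/-! `ℓ` turns substitution into multiplication of polynomials, so a factorisation `a = b · c`
gives `ℓ(a) = ℓ(b) ℓ(c)`. Evaluated at `q = 1`, `ℓ` counts the leaves of a tree, so `ℓ(x)` can
be a unit of `ℤ[q]` only when `x` is the single leaf `1`. -/

namespace NCN

@[elab_as_elim]
theorem induction_on {P : NCN → Prop} (x : NCN) (one : P one)
    (oplus : ∀ a b, P a → P b → P (oplus a b)) : P x := by
  induction x using Quot.ind with
  | mk m =>
    induction m with
    | ih1 => exact one
    | ih2 _ _ ihx ihy => exact oplus _ _ ihx ihy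

theorem eq_one_or_exists_eq_oplus (x : NCN) : x = one ∨ ∃ a b, x = oplus a b := by
  induction x using Quot.ind with
  | mk m =>
    cases m with
    | of => exact Or.inl rfl
    | mul x y => exact Or.inr ⟨Quot.mk _ x, Quot.mk _ y, rfl⟩

theorem one_mul (c : NCN) : mul one c = c := by
  induction c using Quot.ind
  rfl

theorem oplus_mul (a b c : NCN) : mul (oplus a b) c = oplus (mul a c) (mul b c) := by
  induction a using Quot.ind
  induction b using Quot.ind
  induction c using Quot.ind
  rfl

variable {R : Type*}

theorem map_mul_of_map_oplus [CommSemiring R] {f : NCN → R} {q : R} (hone : f one = 1)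
    (hoplus : ∀ a b, f (oplus a b) = f a + q * f b) (b c : NCN) :
    f (mul b c) = f b * f c := by
  induction b using induction_on with
  | one => rw [one_mul, hone, _root_.one_mul]
  | oplus a b iha ihb => rw [oplus_mul, hoplus, hoplus, iha, ihb]; ring

theorem one_le_of_map_oplus [Semiring R] [PartialOrder R] [IsOrderedRing R] {f : NCN → R}
    {q : R} (hq : 0 ≤ q) (hone : f one = 1)
    (hoplus : ∀ a b, f (oplus a b) = f a + q * f b) (x : NCN) : 1 ≤ f x := by
  induction x using induction_on with
  | one => exact hone.ge
  | oplus a b iha ihb =>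
    rw [hoplus]
    exact le_add_of_le_of_nonneg iha (mul_nonneg hq (zero_le_one.trans ihb))

open Polynomial in
theorem eq_one_of_isUnit {ell : NCN → ℤ[X]} (hone : ell one = 1)
    (hoplus : ∀ a b, ell (oplus a b) = ell a + X * ell b) {x : NCN} (hx : IsUnit (ell x)) :
    x = one := by
  have heval : ∀ a b, (ell (oplus a b)).eval 1 = (ell a).eval 1 + 1 * (ell b).eval 1 :=
    fun a b => by rw [hoplus, eval_add, eval_mul, eval_X]
  have hpos : ∀ y, 1 ≤ (ell y).eval 1 :=
    one_le_of_map_oplus zero_le_one (by rw [hone, eval_one]) heval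
  obtain rfl | ⟨a, b, rfl⟩ := x.eq_one_or_exists_eq_oplus
  · rfl
  · obtain ⟨r, hr, hC⟩ := isUnit_iff.mp hx
    have hr_eval : (ell (oplus a b)).eval 1 = r := by rw [← hC, eval_C]
    rcases Int.isUnit_iff.mp hr with rfl | rfl <;> linarith [heval a b, hpos a, hpos b]

end NCN

/-- §5.4: if `ℓ(a)` is irreducible in `ℤ[q]` then `a` is irreducible
in `𝒜`. -/
theorem ncn_irreducible_of_ell_irreducible (ell : NCN → Polynomial ℤ)
    (hone : ell NCN.one = 1)
    (hoplus : ∀ a b : NCN, ell (NCN.oplus a b) = ell a + Polynomial.X * ell b) (a : NCN)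
    (hirr : Irreducible (ell a)) :
    a ≠ NCN.one ∧ ∀ b c : NCN, a = NCN.mul b c → b = NCN.one ∨ c = NCN.one := by
  refine ⟨?_, fun b c habc => ?_⟩
  · rintro rfl
    exact hirr.not_isUnit (hone ▸ isUnit_one)
  · rw [habc, NCN.map_mul_of_map_oplus hone hoplus] at hirr
    exact (hirr.isUnit_or_isUnit rfl).imp (NCN.eq_one_of_isUnit hone hoplus)
      (NCN.eq_one_of_isUnit hone hoplus)
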